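/- Let λ = (λ_1,…,λ_n) ∈ ℂ^n. (1) If a vector ξ ∈ H_n satisfies T_i^* ξ = conj(λ_i)·ξ for all 1 ≤ i ≤ n, then ⟨ξ, ξ_w⟩ = ⟨ξ, ξ_e⟩ · conj(w(λ)) · W(e,w)^{-1} for every word w. (2) Conversely, if ξ ∈ H_n satisfies ⟨ξ, ξ_w⟩ = conj(w(λ)) · W(e,w)^{-1} for every word w (so ⟨ξ, ξ_e⟩ = 1), then T_i^* ξ = conj(λ_i)·ξ for all 1 ≤ i ≤ n. (3) Consequently, for every λ ∈ ℂ^n the joint eigenspace {ξ ∈ H_n : T_i^* ξ = conj(λ_i)·ξ for all i} has dimension at most one. -/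

import Mathlib

noncomputable section

/-- Auxiliary recursion for the weight function: `W(u, []) = 1` and, reading the word
`w = i_k ⋯ i_1` as the list `[i_k, …, i_1]`,
`W(u, i :: w) = λ_{i, w·u} · W(u, w)`, so that
`W(u, i_k⋯i_1) = λ_{i_1,u} · λ_{i_2, i_1 u} ⋯ λ_{i_k, i_{k-1}⋯i_1 u}`. -/
def Waux {n : ℕ} (lam : Fin n → FreeMonoid (Fin n) → ℝ) (u : FreeMonoid (Fin n)) :
    List (Fin n) → ℝ
  | [] => 1
  | i :: w => lam i (FreeMonoid.ofList w * u) * Waux lam u w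

/-- The weight function `W : F_n^+ × F_n^+ → ℝ` associated to the weights `λ_{i,w}`. -/
def Wfun {n : ℕ} (lam : Fin n → FreeMonoid (Fin n) → ℝ) (u w : FreeMonoid (Fin n)) : ℝ :=
  Waux lam u (FreeMonoid.toList w)

instance {n : ℕ} : DecidableEq (FreeMonoid (Fin n)) := Classical.decEq _

/-- `n`-variable Fock space `H_n = ℓ²(F_n^+)`. -/
abbrev Hn (n : ℕ) : Type := lp (fun _ : FreeMonoid (Fin n) => ℂ) 2

/-- The standard orthonormal basis vector `ξ_w` of `H_n`. -/
def xi {n : ℕ} (w : FreeMonoid (Fin n)) : Hn n := lp.single 2 w 1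

/-- `w(λ) = λ_{i_1} ⋯ λ_{i_k}` for a word `w = i_1 ⋯ i_k`, with `e(λ) = 1`. -/
def wl {n : ℕ} (l : Fin n → ℂ) (w : FreeMonoid (Fin n)) : ℂ :=
  ((FreeMonoid.toList w).map l).prod
/-! Pairing the eigenvector equation `T_i^* ξ = conj(λ_i) ξ` with `ξ_w` and moving `T_i^*` across
gives `λ_{i,w} ⟨ξ, ξ_{iw}⟩ = conj(λ_i) ⟨ξ, ξ_w⟩`, and this recursion along words is equivalent to
the eigenvector equation. Since the weights are nonzero it determines every coefficient of `ξ`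
from the one at `e`, so `ξ ↦ ⟨ξ, ξ_e⟩` embeds the joint eigenspace into `ℂ`. -/

lemma Submodule.rank_le_one_of_map_eq_zero {K V : Type*} [Field K] [AddCommGroup V] [Module K V]
    (E : Submodule K V) (f : V →ₗ[K] K) (hf : ∀ x ∈ E, f x = 0 → x = 0) :
    Module.rank K E ≤ 1 := by
  have hinj : Function.Injective (f ∘ₗ E.subtype) := by
    rw [← LinearMap.ker_eq_bot, Submodule.eq_bot_iff]
    exact fun x hx => Subtype.ext (hf x x.2 hx)
  simpa using LinearMap.lift_rank_le_of_injective _ hinj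

lemma ContinuousLinearMap.mem_iInf_ker_sub_smul_one_iff {𝕜 E ι : Type*} [NontriviallyNormedField 𝕜]
    [NormedAddCommGroup E] [NormedSpace 𝕜 E] (A : ι → E →L[𝕜] E) (c : ι → 𝕜) (x : E) :
    x ∈ ⨅ i, LinearMap.ker ((A i - c i • (1 : E →L[𝕜] E) : E →L[𝕜] E) : E →ₗ[𝕜] E) ↔
      ∀ i, A i x = c i • x := by
  simp [Submodule.mem_iInf, sub_eq_zero]

section WeightedShift

variable {n : ℕ} {lam : Fin n → FreeMonoid (Fin n) → ℝ}

lemma Waux_pos (hpos : ∀ i w, 0 < lam i w) (u : FreeMonoid (Fin n)) :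
    ∀ L : List (Fin n), 0 < Waux lam u L
  | [] => one_pos
  | _ :: L => mul_pos (hpos _ _) (Waux_pos hpos u L)

lemma Wfun_pos (hpos : ∀ i w, 0 < lam i w) (u w : FreeMonoid (Fin n)) : 0 < Wfun lam u w :=
  Waux_pos hpos u _

lemma Wfun_one (u : FreeMonoid (Fin n)) : Wfun lam u 1 = 1 := rfl

lemma Wfun_of_mul (u : FreeMonoid (Fin n)) (i : Fin n) (w : FreeMonoid (Fin n)) :
    Wfun lam u (FreeMonoid.of i * w) = lam i (w * u) * Wfun lam u w := by
  rw [Wfun, FreeMonoid.toList_of_mul, Waux, FreeMonoid.ofList_toList, Wfun]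

lemma wl_one (l : Fin n → ℂ) : wl l 1 = 1 := rfl

lemma wl_of_mul (l : Fin n → ℂ) (i : Fin n) (w : FreeMonoid (Fin n)) :
    wl l (FreeMonoid.of i * w) = l i * wl l w := by
  rw [wl, FreeMonoid.toList_of_mul, List.map_cons, List.prod_cons, wl]

lemma inner_xi_left (x : Hn n) (w : FreeMonoid (Fin n)) : @inner ℂ _ _ (xi w) x = x w := by
  rw [xi, lp.inner_single_left]
  simp

lemma Hn.ext_inner_xi {x y : Hn n} (h : ∀ w, @inner ℂ _ _ (xi w) x = @inner ℂ _ _ (xi w) y) :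
    x = y :=
  lp.ext (funext fun w => by simpa only [inner_xi_left] using h w)

variable {T : Fin n → (Hn n →L[ℂ] Hn n)}

lemma inner_xi_adjoint_apply
    (hT : ∀ i w, T i (xi w) = (lam i w : ℂ) • xi (FreeMonoid.of i * w))
    (i : Fin n) (w : FreeMonoid (Fin n)) (ξ : Hn n) :
    @inner ℂ _ _ (xi w) (ContinuousLinearMap.adjoint (T i) ξ) =
      lam i w * @inner ℂ _ _ (xi (FreeMonoid.of i * w)) ξ := by
  rw [ContinuousLinearMap.adjoint_inner_right, hT, inner_smul_left, Complex.conj_ofReal]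

lemma adjoint_apply_eq_smul_iff
    (hT : ∀ i w, T i (xi w) = (lam i w : ℂ) • xi (FreeMonoid.of i * w))
    (i : Fin n) (c : ℂ) (ξ : Hn n) :
    ContinuousLinearMap.adjoint (T i) ξ = c • ξ ↔
      ∀ w, lam i w * @inner ℂ _ _ (xi (FreeMonoid.of i * w)) ξ = c * @inner ℂ _ _ (xi w) ξ := by
  simp only [← inner_xi_adjoint_apply hT, ← inner_smul_right]
  exact ⟨fun h w => by rw [h], Hn.ext_inner_xi⟩

lemma inner_xi_mul_eq_of_adjoint_apply_eq_smul (hpos : ∀ i w, 0 < lam i w)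
    (hT : ∀ i w, T i (xi w) = (lam i w : ℂ) • xi (FreeMonoid.of i * w))
    {l : Fin n → ℂ} {ξ : Hn n}
    (hξ : ∀ i, ContinuousLinearMap.adjoint (T i) ξ = (starRingEnd ℂ) (l i) • ξ)
    (u w : FreeMonoid (Fin n)) :
    @inner ℂ _ _ (xi (w * u)) ξ =
      @inner ℂ _ _ (xi u) ξ * (starRingEnd ℂ) (wl l w) * ((Wfun lam u w : ℂ))⁻¹ := by
  induction w using FreeMonoid.inductionOn' with
  | one => simp [wl_one, Wfun_one]
  | of_mul i w ih =>
    have hrec := (adjoint_apply_eq_smul_iff hT i _ ξ).1 (hξ i) (w * u)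
    have hlam : (lam i (w * u) : ℂ) ≠ 0 := by exact_mod_cast (hpos i (w * u)).ne'
    have hW : (Wfun lam u w : ℂ) ≠ 0 := by exact_mod_cast (Wfun_pos hpos u w).ne'
    rw [ih] at hrec
    rw [mul_assoc (FreeMonoid.of i), ← mul_right_inj' hlam, hrec, wl_of_mul, Wfun_of_mul, map_mul]
    push_cast
    field_simp

lemma adjoint_apply_eq_smul_of_inner_xi_eq (hpos : ∀ i w, 0 < lam i w)
    (hT : ∀ i w, T i (xi w) = (lam i w : ℂ) • xi (FreeMonoid.of i * w))
    {l : Fin n → ℂ} {ξ : Hn n}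
    (hξ : ∀ w, @inner ℂ _ _ (xi w) ξ = (starRingEnd ℂ) (wl l w) * ((Wfun lam 1 w : ℂ))⁻¹)
    (i : Fin n) :
    ContinuousLinearMap.adjoint (T i) ξ = (starRingEnd ℂ) (l i) • ξ := by
  refine (adjoint_apply_eq_smul_iff hT i _ ξ).2 fun w => ?_
  have hlam : (lam i w : ℂ) ≠ 0 := by exact_mod_cast (hpos i w).ne'
  rw [hξ, hξ, wl_of_mul, Wfun_of_mul, mul_one, map_mul]
  push_cast
  field_simp

end WeightedShift

theorem eigenvector_formula_general (n : ℕ)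
    (lam : Fin n → FreeMonoid (Fin n) → ℝ)
    (hpos : ∀ i w, 0 < lam i w)
    (T : Fin n → (Hn n →L[ℂ] Hn n))
    (hT : ∀ i w, T i (xi w) = (lam i w : ℂ) • xi (FreeMonoid.of i * w))
    (l : Fin n → ℂ) :
    (∀ ξ : Hn n,
        (∀ i, ContinuousLinearMap.adjoint (T i) ξ = (starRingEnd ℂ) (l i) • ξ) →
        ∀ w, @inner ℂ _ _ (xi w) ξ =
          @inner ℂ _ _ (xi (1 : FreeMonoid (Fin n))) ξ *
            (starRingEnd ℂ) (wl l w) * ((Wfun lam 1 w : ℂ))⁻¹) ∧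
      (∀ ξ : Hn n,
        (∀ w, @inner ℂ _ _ (xi w) ξ = (starRingEnd ℂ) (wl l w) * ((Wfun lam 1 w : ℂ))⁻¹) →
        ∀ i, ContinuousLinearMap.adjoint (T i) ξ = (starRingEnd ℂ) (l i) • ξ) ∧
      Module.rank ℂ
        ↥(⨅ i : Fin n, LinearMap.ker
            ((ContinuousLinearMap.adjoint (T i) -
              (starRingEnd ℂ) (l i) • (1 : Hn n →L[ℂ] Hn n) : Hn n →L[ℂ] Hn n) :
                Hn n →ₗ[ℂ] Hn n)) ≤ 1 := by
  have coeff : ∀ ξ : Hn n,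
      (∀ i, ContinuousLinearMap.adjoint (T i) ξ = (starRingEnd ℂ) (l i) • ξ) →
      ∀ w, @inner ℂ _ _ (xi w) ξ =
        @inner ℂ _ _ (xi 1) ξ * (starRingEnd ℂ) (wl l w) * ((Wfun lam 1 w : ℂ))⁻¹ :=
    fun ξ hξ w => by simpa using inner_xi_mul_eq_of_adjoint_apply_eq_smul hpos hT hξ 1 w
  refine ⟨coeff, fun ξ hξ => adjoint_apply_eq_smul_of_inner_xi_eq hpos hT hξ, ?_⟩
  refine Submodule.rank_le_one_of_map_eq_zero _ (innerSL ℂ (xi 1)).toLinearMap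
    fun ξ hξ hξ1 => Hn.ext_inner_xi fun w => ?_
  rw [ContinuousLinearMap.mem_iInf_ker_sub_smul_one_iff] at hξ
  change @inner ℂ _ _ (xi 1) ξ = 0 at hξ1
  rw [coeff ξ hξ w, hξ1, zero_mul, zero_mul, inner_zero_right]

/-- (1) any joint eigenvector `ξ` for `(T_1^*, …, T_n^*)` with eigenvalue
`conj(λ)` has coefficients `⟨ξ, ξ_w⟩ = ⟨ξ, ξ_e⟩ · conj(w(λ)) · W(e,w)⁻¹`; (2) conversely
a vector with the normalized coefficients `conj(w(λ)) · W(e,w)⁻¹` is such a joint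
eigenvector; (3) consequently every joint eigenspace is at most one-dimensional.
(Here `⟪ξ_w, ξ⟫` is the coefficient of `ξ` at `ξ_w`, i.e. the pairing `⟨ξ, ξ_w⟩`
of the paper.) -/
theorem eigenvector_formula (n : ℕ) (hn : 2 ≤ n)
    (lam : Fin n → FreeMonoid (Fin n) → ℝ)
    (hpos : ∀ i w, 0 < lam i w) (hbdd : ∃ C : ℝ, ∀ i w, lam i w ≤ C)
    (T : Fin n → (Hn n →L[ℂ] Hn n))
    (hT : ∀ i w, T i (xi w) = (lam i w : ℂ) • xi (FreeMonoid.of i * w))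
    (l : Fin n → ℂ) :
    (∀ ξ : Hn n,
        (∀ i, ContinuousLinearMap.adjoint (T i) ξ = (starRingEnd ℂ) (l i) • ξ) →
        ∀ w, @inner ℂ _ _ (xi w) ξ =
          @inner ℂ _ _ (xi (1 : FreeMonoid (Fin n))) ξ *
            (starRingEnd ℂ) (wl l w) * ((Wfun lam 1 w : ℂ))⁻¹) ∧
      (∀ ξ : Hn n,
        (∀ w, @inner ℂ _ _ (xi w) ξ = (starRingEnd ℂ) (wl l w) * ((Wfun lam 1 w : ℂ))⁻¹) →
        ∀ i, ContinuousLinearMap.adjoint (T i) ξ = (starRingEnd ℂ) (l i) • ξ) ∧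
      Module.rank ℂ
        ↥(⨅ i : Fin n, LinearMap.ker
            ((ContinuousLinearMap.adjoint (T i) -
              (starRingEnd ℂ) (l i) • (1 : Hn n →L[ℂ] Hn n) : Hn n →L[ℂ] Hn n) :
                Hn n →ₗ[ℂ] Hn n)) ≤ 1 :=
  eigenvector_formula_general n lam hpos T hT l
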